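/- (Theorem 2, first bound) In the oblivious model, assume b_k r_k > 0 for k ∈ {1,2}. Then limsup_{T→∞} (1/T) ∑_{t=1}^{T} (1/4) ∑_{m∈{1,2}} ∑_{k∈{1,2}} E[h_{mk}(t)] ≤ (1/2) ∑_{k∈{1,2}} 1/(b_k r_k). -/

import Mathlib

/-- Index type for the family of primitive random variables:
`inl (m, k, t)` indexes the request variable of user `m`, CP `k`, time `t`;
`inr (n, k, t)` indexes the command indicator of eRRH `n`, CP `k`, time `t`. -/
abbrev FranIdx : Type := (Fin 2 × Fin 2 × ℕ) ⊕ (Fin 2 × Fin 2 × ℕ)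

/-- Codomain of each primitive random variable. -/
def FranType : FranIdx → Type
  | .inl _ => Fin 3
  | .inr _ => Bool

instance FranType.instMeasurableSpace : ∀ i, MeasurableSpace (FranType i)
  | .inl _ => inferInstanceAs (MeasurableSpace (Fin 3))
  | .inr _ => inferInstanceAs (MeasurableSpace Bool)

/-- Oblivious 2-user/2-eRRH/2-CP F-RAN model. -/
structure ObliviousFRAN where
  /-- sample space -/
  Ω : Type
  [mΩ : MeasurableSpace Ω]
  μ : MeasureTheory.Measure Ω
  isProb : MeasureTheory.IsProbabilityMeasure μ
  /-- request rates: `bsplit k n = b_k^{(n+1)}` -/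
  bsplit : Fin 2 → Fin 2 → ℝ
  bsplit_nonneg : ∀ k n, 0 ≤ bsplit k n
  bsum_le_one : ∀ k, bsplit k 0 + bsplit k 1 ≤ 1
  /-- command rates -/
  r : Fin 2 → ℝ
  r_nonneg : ∀ k, 0 ≤ r k
  r_le_one : ∀ k, r k ≤ 1
  /-- request variables: value `0` = no request, value `n.succ` = request sent to eRRH `n` -/
  R : Fin 2 → Fin 2 → ℕ → Ω → Fin 3
  /-- command indicators -/
  γ : Fin 2 → Fin 2 → ℕ → Ω → Bool
  R_meas : ∀ m k t, Measurable (R m k t)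
  γ_meas : ∀ n k t, Measurable (γ n k t)
  R_law : ∀ m k t (n : Fin 2), μ {ω | R m k t ω = n.succ} = ENNReal.ofReal (bsplit k n)
  R_law0 : ∀ m k t, μ {ω | R m k t ω = 0} = ENNReal.ofReal (1 - (bsplit k 0 + bsplit k 1))
  γ_law : ∀ n k t, μ {ω | γ n k t ω = true} = ENNReal.ofReal (r k)
  /-- all the primitive random variables are mutually independent -/
  indep : ProbabilityTheory.iIndepFun
      (fun i => Sum.rec (motive := fun j => Ω → FranType j)
        (fun p => R p.1 p.2.1 p.2.2) (fun p => γ p.1 p.2.1 p.2.2) i) μ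

attribute [instance] ObliviousFRAN.mΩ

open MeasureTheory ProbabilityTheory Filter

namespace ObliviousFRAN

variable (M : ObliviousFRAN)

/-- AoI of CP `k` at eRRH `n`. -/
def g (n k : Fin 2) : ℕ → M.Ω → ℕ
  | 0 => fun _ => 1
  | t + 1 => fun ω =>
      if M.γ n k t ω = true ∧ ∃ m : Fin 2, M.R m k t ω = n.succ then 1
      else g n k t ω + 1

/-- AoI of CP `k` at user `m`. -/
def h (m k : Fin 2) : ℕ → M.Ω → ℕ
  | 0 => fun _ => 1
  | t + 1 => fun ω =>
      if M.R m k t ω = 0 then h m k t ω + 1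
      else if M.R m k t ω = 1 then
        (if M.γ 0 k t ω = true then 1 else min (h m k t ω) (M.g 0 k t ω) + 1)
      else
        (if M.γ 1 k t ω = true then 1 else min (h m k t ω) (M.g 1 k t ω) + 1)

/-- Expected AoI of CP `k` at eRRH `n` at time `t`. -/
noncomputable def Eg (n k : Fin 2) (t : ℕ) : ℝ := ∫ ω, (M.g n k t ω : ℝ) ∂M.μ

/-- Expected AoI of CP `k` at user `m` at time `t`. -/
noncomputable def Eh (m k : Fin 2) (t : ℕ) : ℝ := ∫ ω, (M.h m k t ω : ℝ) ∂M.μ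

/-- Total request rate of a user for CP `k`: `b_k = b_k^{(1)} + b_k^{(2)}`. -/
def bk (k : Fin 2) : ℝ := M.bsplit k 0 + M.bsplit k 1

/-- `ζ_{nk} = 1 - (1 - b_k^{(n)})^2`. -/
def ζ (n k : Fin 2) : ℝ := 1 - (1 - M.bsplit k n) ^ 2

end ObliviousFRAN

/-! Call *reset* the event that at time `t` user `m` requests CP `k` from an eRRH that receives
a command for CP `k` at the same time. It has probability `p = b_k r_k`, it is determined by the
time-`t` variables, and `h_{mk}(t)` is determined by the earlier ones, so the two are independent.
On the reset event `h_{mk}(t + 1) = 1`, and always `h_{mk}(t + 1) ≤ h_{mk}(t) + 1`, whence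
`E h_{mk}(t + 1) ≤ p + (1 - p) (E h_{mk}(t) + 1)`. The fixed point of this affine map is `1 / p`
and `E h_{mk}(0) = 1 ≤ 1 / p`, so `E h_{mk}(t) ≤ 1 / (b_k r_k)` for every `t`, and the Cesàro
means inherit the bound. -/

theorem le_one_div_of_succ_le {p : ℝ} (hp : 0 < p) (hp1 : p ≤ 1) {x : ℕ → ℝ}
    (h0 : x 0 ≤ 1 / p) (hsucc : ∀ t, x (t + 1) ≤ p + (1 - p) * (x t + 1)) (t : ℕ) :
    x t ≤ 1 / p := by
  induction t with
  | zero => exact h0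
  | succ t ih =>
    calc x (t + 1) ≤ p + (1 - p) * (x t + 1) := hsucc t
      _ ≤ p + (1 - p) * (1 / p + 1) := by gcongr
      _ = 1 / p := by field_simp; ring

theorem limsup_cesaro_le {a : ℕ → ℝ} {C : ℝ} (h0 : ∀ t, 0 ≤ a t) (hC : ∀ t, a t ≤ C) :
    limsup (fun T : ℕ => (1 / (T : ℝ)) * ∑ t ∈ Finset.Icc 1 T, a t) atTop ≤ C := by
  have hmean_nonneg (T : ℕ) : 0 ≤ (1 / (T : ℝ)) * ∑ t ∈ Finset.Icc 1 T, a t :=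
    mul_nonneg (by positivity) (Finset.sum_nonneg fun t _ => h0 t)
  refine limsup_le_of_le (isCoboundedUnder_le_of_le atTop hmean_nonneg) ?_
  filter_upwards [eventually_gt_atTop 0] with T hT
  have hsum : ∑ t ∈ Finset.Icc 1 T, a t ≤ T * C := by
    simpa using Finset.sum_le_sum fun t (_ : t ∈ Finset.Icc 1 T) => hC t
  rw [one_div_mul_eq_div, div_le_iff₀' (by positivity)]
  exact hsum

theorem integral_le_of_indep_of_le_one_of_le_add_one {Ω : Type*} {m mΩ : MeasurableSpace Ω}
    {μ : Measure Ω} [IsProbabilityMeasure μ] {A : Set Ω} {X Z : Ω → ℝ}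
    (hm : m ≤ mΩ) (hind : Indep m (MeasurableSpace.comap X inferInstance) μ)
    (hA : MeasurableSet[m] A) (hX : Integrable X μ) (hZ : Integrable Z μ)
    (hZA : ∀ ω ∈ A, Z ω ≤ 1) (hZAc : ∀ ω ∈ Aᶜ, Z ω ≤ X ω + 1) :
    ∫ ω, Z ω ∂μ ≤ μ.real A + (1 - μ.real A) * (∫ ω, X ω ∂μ + 1) := by
  have hA' : MeasurableSet A := hm A hA
  have hX1 : Integrable (fun ω => X ω + 1) μ := hX.add (integrable_const 1)
  have hin : ∫ ω in A, Z ω ∂μ ≤ μ.real A := by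
    simpa using setIntegral_mono_on hZ.integrableOn (integrable_const 1).integrableOn hA' hZA
  have hout : ∫ ω in Aᶜ, Z ω ∂μ ≤ ∫ ω in Aᶜ, (X ω + 1) ∂μ :=
    setIntegral_mono_on hZ.integrableOn hX1.integrableOn hA'.compl hZAc
  have hXout : ∫ ω in Aᶜ, (X ω + 1) ∂μ = (1 - μ.real A) * (∫ ω, X ω ∂μ + 1) := by
    rw [hind.setIntegral_eq_mul (f := fun x => x + 1) hm hX.aemeasurable hA.compl
      (by fun_prop), probReal_compl_eq_one_sub hA', integral_add hX (integrable_const 1)]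
    simp
  rw [← integral_add_compl hA' hZ]
  linarith

namespace ObliviousFRAN

attribute [instance] ObliviousFRAN.isProb

variable (M : ObliviousFRAN)

-- `M.indep` says exactly that this family is independent
def prim (i : FranIdx) : M.Ω → FranType i :=
  Sum.rec (motive := fun j => M.Ω → FranType j)
    (fun p => M.R p.1 p.2.1 p.2.2) (fun p => M.γ p.1 p.2.1 p.2.2) i

def time : FranIdx → ℕ := Sum.elim (fun p => p.2.2) (fun p => p.2.2)

theorem measurable_prim : ∀ i, Measurable (M.prim i)
  | .inl _ => M.R_meas _ _ _
  | .inr _ => M.γ_meas _ _ _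

abbrev past (t : ℕ) : MeasurableSpace M.Ω :=
  ⨆ i ∈ {i | time i < t}, MeasurableSpace.comap (M.prim i) inferInstance

abbrev present (t : ℕ) : MeasurableSpace M.Ω :=
  ⨆ i ∈ {i | time i = t}, MeasurableSpace.comap (M.prim i) inferInstance

theorem past_le (t : ℕ) : M.past t ≤ M.mΩ :=
  iSup₂_le fun i _ => (M.measurable_prim i).comap_le

theorem present_le (t : ℕ) : M.present t ≤ M.mΩ :=
  iSup₂_le fun i _ => (M.measurable_prim i).comap_le

theorem past_mono : Monotone M.past := fun _ _ hst =>
  iSup₂_le fun i hi => le_iSup₂_of_le i (lt_of_lt_of_le hi hst) le_rfl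

theorem indep_present_past (t : ℕ) : Indep (M.present t) (M.past t) M.μ :=
  indep_iSup_of_disjoint (fun i => (M.measurable_prim i).comap_le) M.indep.iIndep <|
    Set.disjoint_left.2 fun _ hi hi' => (ne_of_lt hi') hi

theorem measurable_R_present (m k : Fin 2) (t : ℕ) : Measurable[M.present t] (M.R m k t) :=
  measurable_iff_comap_le.2 (le_iSup₂_of_le (.inl (m, k, t)) rfl le_rfl)

theorem measurable_γ_present (n k : Fin 2) (t : ℕ) : Measurable[M.present t] (M.γ n k t) :=
  measurable_iff_comap_le.2 (le_iSup₂_of_le (.inr (n, k, t)) rfl le_rfl)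

theorem measurable_R_past (m k : Fin 2) (t : ℕ) : Measurable[M.past (t + 1)] (M.R m k t) :=
  measurable_iff_comap_le.2 (le_iSup₂_of_le (.inl (m, k, t)) (Nat.lt_succ_self t) le_rfl)

theorem measurable_γ_past (n k : Fin 2) (t : ℕ) : Measurable[M.past (t + 1)] (M.γ n k t) :=
  measurable_iff_comap_le.2 (le_iSup₂_of_le (.inr (n, k, t)) (Nat.lt_succ_self t) le_rfl)

theorem measurable_g_past (n k : Fin 2) (t : ℕ) : Measurable[M.past t] (M.g n k t) := by
  induction t with
  | zero => exact measurable_const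
  | succ t ih =>
    have hinputs : Measurable[M.past (t + 1)]
        fun ω => (M.g n k t ω, M.γ n k t ω, fun m => M.R m k t ω) :=
      (ih.mono (M.past_mono t.le_succ) le_rfl).prodMk <| (M.measurable_γ_past n k t).prodMk <|
        (@measurable_pi_iff _ _ _ (M.past (t + 1)) _ _).2 fun m => M.measurable_R_past m k t
    -- `g n k (t + 1)` is, definitionally, this function of the inputs
    exact (Measurable.of_discrete (f := fun x : ℕ × Bool × (Fin 2 → Fin 3) =>
      if x.2.1 = true ∧ ∃ m, x.2.2 m = n.succ then 1 else x.1 + 1)).comp hinputs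

theorem measurable_h_past (m k : Fin 2) (t : ℕ) : Measurable[M.past t] (M.h m k t) := by
  induction t with
  | zero => exact measurable_const
  | succ t ih =>
    have hg (n : Fin 2) : Measurable[M.past (t + 1)] (M.g n k t) :=
      (M.measurable_g_past n k t).mono (M.past_mono t.le_succ) le_rfl
    have hinputs : Measurable[M.past (t + 1)] fun ω =>
        (M.h m k t ω, M.g 0 k t ω, M.g 1 k t ω, M.R m k t ω, M.γ 0 k t ω, M.γ 1 k t ω) :=
      (ih.mono (M.past_mono t.le_succ) le_rfl).prodMk <| (hg 0).prodMk <| (hg 1).prodMk <|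
        (M.measurable_R_past m k t).prodMk <|
          (M.measurable_γ_past 0 k t).prodMk (M.measurable_γ_past 1 k t)
    -- `h m k (t + 1)` is, definitionally, this function of the inputs
    exact (Measurable.of_discrete (f := fun x : ℕ × ℕ × ℕ × Fin 3 × Bool × Bool =>
      if x.2.2.2.1 = 0 then x.1 + 1
      else if x.2.2.2.1 = 1 then (if x.2.2.2.2.1 = true then 1 else min x.1 x.2.1 + 1)
      else (if x.2.2.2.2.2 = true then 1 else min x.1 x.2.2.1 + 1))).comp hinputs

theorem h_le_add_one (m k : Fin 2) (t : ℕ) (ω : M.Ω) : M.h m k t ω ≤ t + 1 := by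
  induction t with
  | zero => rfl
  | succ t ih =>
    have := min_le_left (M.h m k t ω)
    simp only [h]
    split_ifs <;> grind

theorem integrable_h (m k : Fin 2) (t : ℕ) : Integrable (fun ω => (M.h m k t ω : ℝ)) M.μ := by
  have hmeas : Measurable (M.h m k t) := (M.measurable_h_past m k t).mono (M.past_le t) le_rfl
  refine .of_bound (C := t + 1) (measurable_from_top.comp hmeas).aestronglyMeasurable
    (.of_forall fun ω => ?_)
  rw [Real.norm_natCast]
  exact_mod_cast M.h_le_add_one m k t ω

def reset (m k : Fin 2) (t : ℕ) : Set M.Ω :=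
  {ω | (M.R m k t ω = 1 ∧ M.γ 0 k t ω = true) ∨ (M.R m k t ω = 2 ∧ M.γ 1 k t ω = true)}

theorem measurableSet_reset_present (m k : Fin 2) (t : ℕ) :
    MeasurableSet[M.present t] (M.reset m k t) :=
  have hS : MeasurableSet {x : Fin 3 × Bool × Bool | (x.1 = 1 ∧ x.2.1) ∨ (x.1 = 2 ∧ x.2.2)} :=
    .of_discrete
  ((M.measurable_R_present m k t).prodMk <|
    (M.measurable_γ_present 0 k t).prodMk (M.measurable_γ_present 1 k t)) hS

theorem measureReal_R_eq_succ_and_γ (m k n : Fin 2) (t : ℕ) :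
    M.μ.real {ω | M.R m k t ω = n.succ ∧ M.γ n k t ω = true} = M.bsplit k n * M.r k := by
  have hind : IndepFun (M.R m k t) (M.γ n k t) M.μ :=
    M.indep.indepFun (i := .inl (m, k, t)) (j := .inr (n, k, t)) (by simp)
  have hR : M.μ (M.R m k t ⁻¹' {n.succ}) = ENNReal.ofReal (M.bsplit k n) := M.R_law m k t n
  have hγ : M.μ (M.γ n k t ⁻¹' {true}) = ENNReal.ofReal (M.r k) := M.γ_law n k t
  change M.μ.real (M.R m k t ⁻¹' {n.succ} ∩ M.γ n k t ⁻¹' {true}) = _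
  rw [measureReal_def, hind.measure_inter_preimage_eq_mul _ _ (measurableSet_singleton _)
    (measurableSet_singleton _), hR, hγ, ← ENNReal.ofReal_mul (M.bsplit_nonneg k n),
    ENNReal.toReal_ofReal (mul_nonneg (M.bsplit_nonneg k n) (M.r_nonneg k))]

theorem measureReal_reset (m k : Fin 2) (t : ℕ) :
    M.μ.real (M.reset m k t) = M.bk k * M.r k := by
  have hdisj : Disjoint {ω | M.R m k t ω = 1 ∧ M.γ 0 k t ω = true}
      {ω | M.R m k t ω = 2 ∧ M.γ 1 k t ω = true} :=
    Set.disjoint_left.2 fun ω h₁ h₂ => absurd (h₁.1.symm.trans h₂.1) (by decide)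
  have hmeas : MeasurableSet {ω | M.R m k t ω = 2 ∧ M.γ 1 k t ω = true} :=
    (M.R_meas m k t (measurableSet_singleton 2)).inter
      (M.γ_meas 1 k t (measurableSet_singleton true))
  rw [reset, Set.ofPred_or, measureReal_union hdisj hmeas, bk, add_mul]
  exact congrArg₂ (· + ·) (M.measureReal_R_eq_succ_and_γ m k 0 t)
    (M.measureReal_R_eq_succ_and_γ m k 1 t)

theorem h_succ_of_mem_reset {m k : Fin 2} {t : ℕ} {ω : M.Ω} (hω : ω ∈ M.reset m k t) :
    M.h m k (t + 1) ω = 1 := by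
  rcases hω with ⟨hR, hγ⟩ | ⟨hR, hγ⟩ <;> simp [h, hR, hγ]

theorem h_succ_le (m k : Fin 2) (t : ℕ) (ω : M.Ω) : M.h m k (t + 1) ω ≤ M.h m k t ω + 1 := by
  have := min_le_left (M.h m k t ω)
  simp only [h]
  split_ifs <;> grind

theorem Eh_nonneg (m k : Fin 2) (t : ℕ) : 0 ≤ M.Eh m k t :=
  integral_nonneg fun _ => Nat.cast_nonneg _

theorem Eh_zero (m k : Fin 2) : M.Eh m k 0 = 1 := by
  simp [Eh, h]

theorem bk_mul_r_le_one (k : Fin 2) : M.bk k * M.r k ≤ 1 :=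
  mul_le_one₀ (M.bsum_le_one k) (M.r_nonneg k) (M.r_le_one k)

theorem Eh_succ_le (m k : Fin 2) (t : ℕ) :
    M.Eh m k (t + 1) ≤ M.bk k * M.r k + (1 - M.bk k * M.r k) * (M.Eh m k t + 1) := by
  have hind : Indep (M.present t)
      (MeasurableSpace.comap (fun ω => (M.h m k t ω : ℝ)) inferInstance) M.μ :=
    indep_of_indep_of_le_right (M.indep_present_past t)
      (measurable_from_top.comp (M.measurable_h_past m k t)).comap_le
  have := integral_le_of_indep_of_le_one_of_le_add_one (M.present_le t) hind
    (M.measurableSet_reset_present m k t) (M.integrable_h m k t) (M.integrable_h m k (t + 1))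
    (fun ω hω => by simp [M.h_succ_of_mem_reset hω])
    (fun ω _ => by exact_mod_cast M.h_succ_le m k t ω)
  rwa [measureReal_reset] at this

theorem Eh_le (m k : Fin 2) (hk : 0 < M.bk k * M.r k) (t : ℕ) :
    M.Eh m k t ≤ 1 / (M.bk k * M.r k) :=
  le_one_div_of_succ_le hk (M.bk_mul_r_le_one k)
    ((M.Eh_zero m k).trans_le (one_le_one_div hk (M.bk_mul_r_le_one k))) (M.Eh_succ_le m k) t

end ObliviousFRAN

/-- Theorem 2, first bound. -/
theorem stmt4 (M : ObliviousFRAN) (hpos : ∀ k : Fin 2, 0 < M.bk k * M.r k) :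
    limsup
      (fun T : ℕ =>
        (1 / (T : ℝ)) * ∑ t ∈ Finset.Icc 1 T,
          (1 / 4 : ℝ) * ∑ m : Fin 2, ∑ k : Fin 2, M.Eh m k t)
      atTop
    ≤ (1 / 2 : ℝ) * ∑ k : Fin 2, 1 / (M.bk k * M.r k) := by
  refine limsup_cesaro_le (fun t => ?_) (fun t => ?_)
  · exact mul_nonneg (by norm_num)
      (Finset.sum_nonneg fun m _ => Finset.sum_nonneg fun k _ => M.Eh_nonneg m k t)
  · have (m k : Fin 2) := M.Eh_le m k (hpos k) t
    simp only [Fin.sum_univ_two]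
    linarith [this 0 0, this 0 1, this 1 0, this 1 1]
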